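/- arXiv:1905.06137 — 3 statements merged into one kernel-verified Lean document; each statement's English description precedes it below -/
import Mathlib

section
/- Let (Ω, 𝓕, μ) be a probability space and Γ a difference operator such that μ satisfies a Γ-mLSI(ρ) for some ρ > 0. Let f, g : Ω → ℝ be measurable functions with f in the admissible class, Γ(f) ≤ g pointwise, and suppose there exist c > 0, C ≥ 1 and K > 0 with μ(g ≥ c + t) ≤ C·exp(−t²/(2K²)) for all t ≥ 0. Then for all t ≥ 0, μ(f − E_μ f ≥ t) ≤ (4C/3)·exp(−t²/(8(ρc² + √ρ·K·t))). If Γ(a·f) = |a|·Γ(f) for all a ∈ ℝ, then the same bound holds with f replaced by −f. -/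
/-!
Let `X = (g - c)₊`. Its Gaussian tail gives, by the layer-cake formula,
`E exp (X² / (8K²)) ≤ 1 + C/3`. Apply the mLSI to `s f` and bound `Γ(f)² ≤ 2c² + 2X²`. The
entropy duality `E[u v] ≤ Ent(v) + E[v] log E[eᵘ]`, with `u = X² / (8K²)` and `v = e^{s f}`,
bounds the `X²` term by the entropy itself, and for `s ≤ 1/(4√ρK)` that term can be absorbed:
`Ent(e^{s f}) ≤ κ s² E[e^{s f}]`. Herbst's argument (`s ↦ log E[e^{s f}] / s - κ s` is
nonincreasing) turns this into `log E[e^{s (f - E f)}] ≤ κ s²`, and the Chernoff bound at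
`s = min (t/(4ρc²), 1/(4√ρK))` gives the Bernstein-type tail. Under the symmetry
`Γ(-f) = Γ(f)` the lower tail is the upper tail of `-f`.
-/

open MeasureTheory ProbabilityTheory Real Set Filter Topology

lemma mul_le_exp_add_mul_log_sub (x : ℝ) {y : ℝ} (hy : 0 ≤ y) :
    x * y ≤ exp x + (y * log y - y) := by
  rcases hy.eq_or_lt with rfl | hy
  · simp [(exp_pos x).le]
  have h := mul_le_mul_of_nonneg_left (add_one_le_exp (x - log y)) hy.le
  rw [exp_sub, exp_log hy, mul_div_cancel₀ _ hy.ne'] at h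
  linarith

lemma exists_bernstein_exponent {a b t : ℝ} (ha : 0 < a) (hb : 0 < b) (ht : 0 ≤ t) :
    ∃ l, 0 ≤ l ∧ l ≤ (4 * b)⁻¹ ∧ 2 * a * l ^ 2 - l * t ≤ -t ^ 2 / (8 * (a + b * t)) := by
  have hbt : 0 ≤ b * t := mul_nonneg hb.le ht
  rcases le_or_gt (b * t) a with hsmall | hlarge
  · refine ⟨t / (4 * a), by positivity, ?_, ?_⟩
    · rw [div_le_iff₀ (by positivity), ← div_eq_inv_mul, le_div_iff₀ (by positivity)]
      linarith
    · have : 2 * a * (t / (4 * a)) ^ 2 - t / (4 * a) * t = -t ^ 2 / (8 * a) := by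
        field_simp; ring
      rw [this, neg_div, neg_div, neg_le_neg_iff]
      gcongr
      linarith
  · refine ⟨(4 * b)⁻¹, by positivity, le_rfl, ?_⟩
    rw [le_div_iff₀ (by positivity)]
    field_simp
    nlinarith [mul_pos ha (sub_pos.mpr hlarge), mul_pos ha ha]

lemma integral_mul_exp_neg_mul_sq_Ioi {a : ℝ} (ha : 0 < a) :
    ∫ t in Ioi (0 : ℝ), t * exp (-a * t ^ 2) = (2 * a)⁻¹ := by
  have h := integral_mul_cexp_neg_mul_sq (b := (a : ℂ)) (by simpa using ha)
  have : ((∫ t in Ioi (0 : ℝ), t * exp (-a * t ^ 2) : ℝ) : ℂ) = ((2 * a)⁻¹ : ℝ) := by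
    rw [← integral_complex_ofReal]; push_cast; exact h
  exact_mod_cast this

lemma herbst_argument {F F' : ℝ → ℝ} {κ Λ : ℝ} (hΛ : 0 < Λ)
    (hF : ∀ s ∈ Icc 0 Λ, HasDerivAt F (F' s) s) (hF0 : F 0 = 0)
    (hslope : ∀ s ∈ Ioc 0 Λ, s * F' s - F s ≤ κ * s ^ 2) :
    F Λ ≤ F' 0 * Λ + κ * Λ ^ 2 := by
  set G : ℝ → ℝ := fun s => F s / s - κ * s
  have hG : ∀ s ∈ Ioc 0 Λ, HasDerivAt G ((F' s * s - F s * 1) / s ^ 2 - κ * 1) s := fun s hs =>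
    ((hF s (Ioc_subset_Icc_self hs)).div (hasDerivAt_id s) hs.1.ne').sub
      ((hasDerivAt_id s).const_mul κ)
  have hanti : AntitoneOn G (Ioc 0 Λ) := by
    refine antitoneOn_of_deriv_nonpos (convex_Ioc 0 Λ)
      (fun s hs => (hG s hs).continuousAt.continuousWithinAt) ?_ ?_
    · intro s hs
      rw [interior_Ioc] at hs
      exact (hG s (Ioo_subset_Ioc_self hs)).differentiableAt.differentiableWithinAt
    · intro s hs
      rw [interior_Ioc] at hs
      have hs' := Ioo_subset_Ioc_self hs
      rw [(hG s hs').deriv, sub_nonpos, mul_one, div_le_iff₀ (by nlinarith [hs.1])]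
      linarith [hslope s hs']
  have hlim : Tendsto G (𝓝[>] 0) (𝓝 (F' 0 - κ * 0)) := by
    refine Tendsto.sub ?_ ((continuous_const.mul continuous_id).tendsto 0 |>.mono_left
      nhdsWithin_le_nhds)
    have := (hF 0 ⟨le_rfl, hΛ.le⟩).tendsto_slope_zero_right
    simpa [hF0, div_eq_inv_mul] using this
  have hGΛ : G Λ ≤ F' 0 - κ * 0 := by
    refine ge_of_tendsto hlim ?_
    filter_upwards [Ioo_mem_nhdsGT hΛ] with s hs
    exact hanti (Ioo_subset_Ioc_self hs) ⟨hΛ, le_rfl⟩ hs.2.le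
  simp only [G, mul_zero, sub_zero] at hGΛ
  rw [sub_le_iff_le_add, div_le_iff₀ hΛ] at hGΛ
  linarith

section

variable {Ω : Type*} [MeasurableSpace Ω] {μ : Measure Ω}

noncomputable def ent (μ : Measure Ω) (v : Ω → ℝ) : ℝ :=
  ∫ x, v x * log (v x) ∂μ - (∫ x, v x ∂μ) * log (∫ x, v x ∂μ)

lemma ent_exp_eq (h : Ω → ℝ) :
    ent μ (fun x => exp (h x)) =
      ∫ x, h x * exp (h x) ∂μ - (∫ x, exp (h x) ∂μ) * log (∫ x, exp (h x) ∂μ) := by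
  simp only [ent, log_exp, mul_comm]

theorem integral_mul_le_ent_add_mul_log_integral_exp [NeZero μ] {u v : Ω → ℝ}
    (hv : ∀ x, 0 < v x) (hvi : Integrable v μ) (hvlog : Integrable (fun x => v x * log (v x)) μ)
    (huv : Integrable (fun x => u x * v x) μ) (hu : Integrable (fun x => exp (u x)) μ) :
    ∫ x, u x * v x ∂μ ≤ ent μ v + (∫ x, v x ∂μ) * log (∫ x, exp (u x) ∂μ) := by
  set s := ∫ x, v x ∂μ
  set T := ∫ x, exp (u x) ∂μ
  have hs : 0 < s := (integral_pos_iff_support_of_nonneg (fun x => (hv x).le) hvi).mpr <| by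
    simp [Function.support, fun x => (hv x).ne', NeZero.ne μ]
  have hT : 0 < T := integral_exp_pos hu
  have hpt : ∀ x, u x * v x ≤
      s / T * exp (u x) + v x * log (v x) + (log T - log s - 1) * v x := by
    intro x
    have h := mul_le_exp_add_mul_log_sub (u x - log T + log s) (hv x).le
    rw [exp_add, exp_sub, exp_log hT, exp_log hs] at h
    linarith [show exp (u x) / T * s = s / T * exp (u x) by ring]
  have hrhs : Integrable (fun x => s / T * exp (u x) + v x * log (v x)) μ :=
    (hu.const_mul _).add hvlog
  calc ∫ x, u x * v x ∂μ
      ≤ ∫ x, (s / T * exp (u x) + v x * log (v x) + (log T - log s - 1) * v x) ∂μ :=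
        integral_mono huv (hrhs.add (hvi.const_mul _)) hpt
    _ = ent μ v + s * log T := by
        rw [integral_add hrhs (hvi.const_mul _), integral_add (hu.const_mul _) hvlog,
          integral_const_mul, integral_const_mul, div_mul_cancel₀ _ hT.ne', ent]
        ring

theorem lintegral_exp_mul_sq_sub_one_le_of_tail [IsFiniteMeasure μ] {X : Ω → ℝ} {C a β : ℝ}
    (hX : Measurable X) (hX0 : ∀ x, 0 ≤ X x) (hC : 0 ≤ C) (hβ : 0 < β) (hβa : β < a)
    (htail : ∀ t, 0 < t → μ.real {x | t ≤ X x} ≤ C * exp (-a * t ^ 2)) :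
    ∫⁻ x, ENNReal.ofReal (exp (β * X x ^ 2) - 1) ∂μ ≤ ENNReal.ofReal (C * β / (a - β)) := by
  set g : ℝ → ℝ := fun t => 2 * β * t * exp (β * t ^ 2)
  have hg : Continuous g := by fun_prop
  have hderiv : ∀ t, HasDerivAt (fun t => exp (β * t ^ 2)) (g t) t := fun t => by
    convert ((hasDerivAt_pow 2 t).const_mul β).exp using 1
    simp only [g]; ring
  have hprim : ∀ y, ∫ t in (0 : ℝ)..y, g t = exp (β * y ^ 2) - 1 := fun y => by
    simp [intervalIntegral.integral_eq_sub_of_hasDerivAt (fun t _ => hderiv t)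
      (hg.intervalIntegrable 0 y)]
  have hlayer := lintegral_comp_eq_lintegral_meas_le_mul μ (ae_of_all _ hX0) hX.aemeasurable
    (fun t _ => hg.intervalIntegrable 0 t) (g := g) <| by
      filter_upwards [ae_restrict_mem measurableSet_Ioi] with t (ht : 0 < t)
      positivity
  simp only [hprim] at hlayer
  rw [hlayer]
  have hval : ∫ t in Ioi (0 : ℝ), 2 * β * C * (t * exp (-(a - β) * t ^ 2)) = C * β / (a - β) := by
    rw [integral_const_mul, integral_mul_exp_neg_mul_sq_Ioi (sub_pos.mpr hβa)]
    field_simp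
  rw [← hval, ofReal_integral_eq_lintegral_ofReal
    (((integrable_mul_exp_neg_mul_sq (sub_pos.mpr hβa)).integrableOn).const_mul _)]
  swap
  · filter_upwards [ae_restrict_mem measurableSet_Ioi] with t (ht : 0 < t)
    positivity
  refine lintegral_mono_ae ?_
  filter_upwards [ae_restrict_mem measurableSet_Ioi] with t (ht : 0 < t)
  have hμt : μ {x | t ≤ X x} ≤ ENNReal.ofReal (C * exp (-a * t ^ 2)) :=
    (ENNReal.le_ofReal_iff_toReal_le (measure_ne_top μ _) (by positivity)).mpr (htail t ht)
  calc μ {x | t ≤ X x} * ENNReal.ofReal (g t)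
      ≤ ENNReal.ofReal (C * exp (-a * t ^ 2)) * ENNReal.ofReal (g t) := by gcongr
    _ = ENNReal.ofReal (2 * β * C * (t * exp (-(a - β) * t ^ 2))) := by
      rw [← ENNReal.ofReal_mul (by positivity)]
      congr 1
      simp only [g]
      rw [show -(a - β) * t ^ 2 = -a * t ^ 2 + β * t ^ 2 by ring, exp_add]
      ring

theorem integrable_exp_mul_sq_and_integral_le_of_tail [IsProbabilityMeasure μ] {X : Ω → ℝ}
    {C a β : ℝ}
    (hX : Measurable X) (hX0 : ∀ x, 0 ≤ X x) (hC : 0 ≤ C) (hβ : 0 < β) (hβa : β < a)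
    (htail : ∀ t, 0 < t → μ.real {x | t ≤ X x} ≤ C * exp (-a * t ^ 2)) :
    Integrable (fun x => exp (β * X x ^ 2)) μ ∧
      ∫ x, exp (β * X x ^ 2) ∂μ ≤ 1 + C * β / (a - β) := by
  have hβa' : 0 ≤ C * β / (a - β) := div_nonneg (by positivity) (sub_pos.mpr hβa).le
  have hle : ∫⁻ x, ENNReal.ofReal (exp (β * X x ^ 2)) ∂μ ≤ ENNReal.ofReal (1 + C * β / (a - β)) :=
    calc ∫⁻ x, ENNReal.ofReal (exp (β * X x ^ 2)) ∂μ
        = ∫⁻ x, (ENNReal.ofReal (exp (β * X x ^ 2) - 1) + 1) ∂μ := by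
          refine lintegral_congr fun x => ?_
          rw [← ENNReal.ofReal_one, ← ENNReal.ofReal_add
            (sub_nonneg.mpr (one_le_exp (by positivity))) zero_le_one, sub_add_cancel]
      _ = ∫⁻ x, ENNReal.ofReal (exp (β * X x ^ 2) - 1) ∂μ + 1 := by
          rw [lintegral_add_right _ measurable_const, lintegral_const, measure_univ, one_mul]
      _ ≤ ENNReal.ofReal (C * β / (a - β)) + 1 := by
          gcongr
          exact lintegral_exp_mul_sq_sub_one_le_of_tail hX hX0 hC hβ hβa htail
      _ = ENNReal.ofReal (1 + C * β / (a - β)) := by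
          rw [ENNReal.ofReal_add zero_le_one hβa', ENNReal.ofReal_one, add_comm]
  have hmeas : Measurable fun x => exp (β * X x ^ 2) := by fun_prop
  have hint : Integrable (fun x => exp (β * X x ^ 2)) μ :=
    ⟨hmeas.aestronglyMeasurable, (hasFiniteIntegral_iff_ofReal
      (ae_of_all _ fun x => (exp_pos _).le)).mpr (hle.trans_lt ENNReal.ofReal_lt_top)⟩
  refine ⟨hint, (ENNReal.ofReal_le_ofReal_iff (by positivity)).mp ?_⟩
  rwa [ofReal_integral_eq_lintegral_ofReal hint (ae_of_all _ fun x => (exp_pos _).le)]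

theorem one_le_integral_exp_of_nonneg [IsProbabilityMeasure μ] {u : Ω → ℝ} (hu0 : ∀ x, 0 ≤ u x)
    (hu : Integrable (fun x => exp (u x)) μ) : 1 ≤ ∫ x, exp (u x) ∂μ :=
  calc (1 : ℝ) = ∫ _, (1 : ℝ) ∂μ := by simp
    _ ≤ ∫ x, exp (u x) ∂μ := integral_mono (integrable_const 1) hu fun x => one_le_exp (hu0 x)

section BoundedFunction

variable [IsProbabilityMeasure μ] {f : Ω → ℝ} {B : ℝ}

omit [IsProbabilityMeasure μ] in
lemma integrable_exp_mul_of_abs_le [IsFiniteMeasure μ] (hf : Measurable f) (hB : ∀ x, |f x| ≤ B)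
    (s : ℝ) :
    Integrable (fun x => exp (s * f x)) μ :=
  integrable_exp_mul_of_mem_Icc hf.aemeasurable (ae_of_all _ fun x => abs_le.mp (hB x))

lemma hasDerivAt_cgf_of_abs_le (hf : Measurable f) (hB : ∀ x, |f x| ≤ B) (s : ℝ) :
    HasDerivAt (cgf f μ) ((∫ x, f x * exp (s * f x) ∂μ) / mgf f μ s) s := by
  have h : integrableExpSet f μ = univ :=
    eq_univ_of_forall (integrable_exp_mul_of_abs_le hf hB)
  exact (hasDerivAt_mgf (by simp [h])).log (mgf_pos (integrable_exp_mul_of_abs_le hf hB s)).ne'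

omit [IsProbabilityMeasure μ] in
lemma ent_exp_mul_eq (s : ℝ) :
    ent μ (fun x => exp (s * f x)) =
      s * ∫ x, f x * exp (s * f x) ∂μ - mgf f μ s * cgf f μ s := by
  simp only [ent_exp_eq, mgf, cgf, ← integral_const_mul, mul_assoc]

theorem cgf_le_of_ent_le (hf : Measurable f) (hB : ∀ x, |f x| ≤ B) {κ Λ : ℝ} (hΛ : 0 ≤ Λ)
    (hent : ∀ s ∈ Ioc 0 Λ, ent μ (fun x => exp (s * f x)) ≤ κ * s ^ 2 * mgf f μ s) :
    cgf f μ Λ ≤ Λ * ∫ x, f x ∂μ + κ * Λ ^ 2 := by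
  rcases hΛ.eq_or_lt with rfl | hΛ
  · simp
  have hslope : ∀ s ∈ Ioc 0 Λ,
      s * ((∫ x, f x * exp (s * f x) ∂μ) / mgf f μ s) - cgf f μ s ≤ κ * s ^ 2 := by
    intro s hs
    have hpos := mgf_pos (integrable_exp_mul_of_abs_le hf hB s) (μ := μ)
    have key : s * ((∫ x, f x * exp (s * f x) ∂μ) / mgf f μ s) - cgf f μ s =
        ent μ (fun x => exp (s * f x)) / mgf f μ s := by
      rw [ent_exp_mul_eq]
      field_simp
    rw [key, div_le_iff₀ hpos]
    exact hent s hs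
  have h := herbst_argument hΛ (fun s _ => hasDerivAt_cgf_of_abs_le hf hB s)
    (cgf_zero (μ := μ)) hslope
  simpa [mgf_zero, mul_comm] using h

theorem integral_sq_mul_exp_le {G X w : Ω → ℝ} {c β D : ℝ} (hβ : 0 < β)
    (hG : ∀ x, 0 ≤ G x) (hGX : ∀ x, G x ≤ c + X x) (hX : Measurable X)
    (hXi : Integrable (fun x => exp (β * X x ^ 2)) μ) (hD : ∫ x, exp (β * X x ^ 2) ∂μ ≤ D)
    (hw : Measurable w) (hwB : ∀ x, |w x| ≤ B) :
    ∫ x, G x ^ 2 * exp (w x) ∂μ ≤ 2 * c ^ 2 * ∫ x, exp (w x) ∂μ +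
      2 / β * (ent μ (fun x => exp (w x)) + (∫ x, exp (w x) ∂μ) * log D) := by
  have hexpB : ∀ x, ‖exp (w x)‖ ≤ exp B := fun x => by
    rw [norm_of_nonneg (exp_pos _).le]
    exact exp_le_exp.mpr (le_of_abs_le (hwB x))
  have hv : Integrable (fun x => exp (w x)) μ :=
    .of_bound (by fun_prop) _ (ae_of_all _ hexpB)
  have hvlog : Integrable (fun x => exp (w x) * log (exp (w x))) μ := by
    refine .of_bound (by fun_prop) (exp B * B) (ae_of_all _ fun x => ?_)
    rw [log_exp, norm_mul]
    exact mul_le_mul (hexpB x) (hwB x) (norm_nonneg _) (exp_pos _).le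
  have hu : Integrable (fun x => β * X x ^ 2) μ :=
    hXi.mono' (by fun_prop) (ae_of_all _ fun x => by
      rw [norm_of_nonneg (by positivity)]
      linarith [add_one_le_exp (β * X x ^ 2)])
  have huv : Integrable (fun x => β * X x ^ 2 * exp (w x)) μ :=
    hu.mul_bdd (by fun_prop) (ae_of_all _ hexpB)
  have hduality := integral_mul_le_ent_add_mul_log_integral_exp (fun x => exp_pos (w x)) hv hvlog
    huv hXi
  calc ∫ x, G x ^ 2 * exp (w x) ∂μ
      ≤ ∫ x, (2 * c ^ 2 * exp (w x) + 2 / β * (β * X x ^ 2 * exp (w x))) ∂μ := by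
        refine integral_mono_of_nonneg (ae_of_all _ fun x => by positivity)
          ((hv.const_mul _).add (huv.const_mul _)) (ae_of_all _ fun x => ?_)
        have hGsq : G x ^ 2 ≤ 2 * c ^ 2 + 2 * X x ^ 2 := by
          nlinarith [hG x, hGX x, sq_nonneg (c - X x)]
        have : 2 / β * (β * X x ^ 2 * exp (w x)) = 2 * X x ^ 2 * exp (w x) := by
          field_simp
        simp only [this]
        nlinarith [exp_pos (w x)]
    _ = 2 * c ^ 2 * ∫ x, exp (w x) ∂μ + 2 / β * ∫ x, β * X x ^ 2 * exp (w x) ∂μ := by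
        rw [integral_add (hv.const_mul _) (huv.const_mul _), integral_const_mul,
          integral_const_mul]
    _ ≤ 2 * c ^ 2 * ∫ x, exp (w x) ∂μ +
        2 / β * (ent μ (fun x => exp (w x)) + (∫ x, exp (w x) ∂μ) * log D) := by
        gcongr
        exact hduality.trans (by gcongr; exact integral_exp_pos hXi)

theorem ent_exp_mul_le {G X : Ω → ℝ} {c β D ρ s : ℝ} (hf : Measurable f) (hB : ∀ x, |f x| ≤ B)
    (hβ : 0 < β) (hG : ∀ x, 0 ≤ G x) (hGX : ∀ x, G x ≤ c + X x) (hX : Measurable X)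
    (hXi : Integrable (fun x => exp (β * X x ^ 2)) μ) (hD : ∫ x, exp (β * X x ^ 2) ∂μ ≤ D)
    (hρ : 0 ≤ ρ) (hs : 2 * ρ * s ^ 2 ≤ β)
    (hLSI : ent μ (fun x => exp (s * f x)) ≤ ρ / 2 * s ^ 2 * ∫ x, G x ^ 2 * exp (s * f x) ∂μ) :
    ent μ (fun x => exp (s * f x)) ≤ 2 * ρ * (c ^ 2 + log D / β) * s ^ 2 * mgf f μ s := by
  have hsq := integral_sq_mul_exp_le hβ hG hGX hX hXi hD (hf.const_mul s) (B := |s| * B)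
    fun x => by rw [abs_mul]; exact mul_le_mul_of_nonneg_left (hB x) (abs_nonneg s)
  have hP : 0 < mgf f μ s := mgf_pos (integrable_exp_mul_of_abs_le hf hB s)
  have hL : 0 ≤ log D :=
    log_nonneg ((one_le_integral_exp_of_nonneg (fun x => by positivity) hXi).trans hD)
  -- `θ ≤ 1/2` lets the entropy on the right be absorbed into the left-hand side
  set θ := ρ * s ^ 2 / β
  have hθ : θ ≤ 1 / 2 := by rw [div_le_iff₀ hβ]; linarith
  have hθ0 : 0 ≤ θ := by positivity
  set E := ent μ (fun x => exp (s * f x))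
  have hE : E ≤ ρ * s ^ 2 * c ^ 2 * mgf f μ s + θ * E + θ * (mgf f μ s * log D) := by
    calc E ≤ ρ / 2 * s ^ 2 * ∫ x, G x ^ 2 * exp (s * f x) ∂μ := hLSI
      _ ≤ ρ / 2 * s ^ 2 * (2 * c ^ 2 * mgf f μ s + 2 / β * (E + mgf f μ s * log D)) := by
        gcongr; exact hsq
      _ = _ := by simp only [θ]; field_simp; ring
  have hA : 0 ≤ ρ * s ^ 2 * c ^ 2 * mgf f μ s := by positivity
  have hPL : 0 ≤ θ * (mgf f μ s * log D) := by positivity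
  calc E ≤ 2 * (ρ * s ^ 2 * c ^ 2 * mgf f μ s) + 2 * (θ * (mgf f μ s * log D)) := by
        rcases le_or_gt E 0 with hE0 | hE0
        · linarith
        · linarith [mul_le_mul_of_nonneg_right hθ hE0.le]
    _ = _ := by simp only [θ]; field_simp

theorem measure_sub_integral_ge_le_of_integral_exp_sq_le {G X : Ω → ℝ} {c β D ρ l : ℝ}
    (hf : Measurable f) (hB : ∀ x, |f x| ≤ B)
    (hβ : 0 < β) (hG : ∀ x, 0 ≤ G x) (hGX : ∀ x, G x ≤ c + X x) (hX : Measurable X)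
    (hXi : Integrable (fun x => exp (β * X x ^ 2)) μ) (hD : ∫ x, exp (β * X x ^ 2) ∂μ ≤ D)
    (hρ : 0 ≤ ρ) (hLSI : ∀ s, 0 ≤ s →
      ent μ (fun x => exp (s * f x)) ≤ ρ / 2 * s ^ 2 * ∫ x, G x ^ 2 * exp (s * f x) ∂μ)
    (hl : 0 ≤ l) (hlβ : 2 * ρ * l ^ 2 ≤ β) (t : ℝ) :
    μ.real {x | t ≤ f x - ∫ y, f y ∂μ} ≤ D * exp (2 * ρ * c ^ 2 * l ^ 2 - l * t) := by
  have hcgf := cgf_le_of_ent_le hf hB hl fun s hs =>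
    ent_exp_mul_le hf hB hβ hG hGX hX hXi hD hρ
      ((mul_le_mul_of_nonneg_left (pow_le_pow_left₀ hs.1.le hs.2 2) (by positivity)).trans hlβ)
      (hLSI s hs.1.le)
  have hD1 : 1 ≤ D := (one_le_integral_exp_of_nonneg (fun x => by positivity) hXi).trans hD
  have hθ : 2 * ρ * l ^ 2 / β * log D ≤ log D :=
    mul_le_of_le_one_left (log_nonneg hD1) ((div_le_one hβ).mpr hlβ)
  have hκ : 2 * ρ * (c ^ 2 + log D / β) * l ^ 2 =
      2 * ρ * l ^ 2 / β * log D + 2 * ρ * c ^ 2 * l ^ 2 := by ring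
  calc μ.real {x | t ≤ f x - ∫ y, f y ∂μ}
      = μ.real {x | t + ∫ y, f y ∂μ ≤ f x} := by simp only [le_sub_iff_add_le]
    _ ≤ exp (-l * (t + ∫ y, f y ∂μ) + cgf f μ l) :=
      measure_ge_le_exp_cgf _ hl (integrable_exp_mul_of_abs_le hf hB l)
    _ ≤ exp (log D + (2 * ρ * c ^ 2 * l ^ 2 - l * t)) := exp_le_exp.mpr (by linarith)
    _ = D * exp (2 * ρ * c ^ 2 * l ^ 2 - l * t) := by
      rw [exp_add, exp_log (by linarith)]

theorem measure_sub_integral_ge_le_bernstein {G g : Ω → ℝ} {ρ c C K : ℝ}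
    (hf : Measurable f) (hB : ∀ x, |f x| ≤ B) (hρ : 0 < ρ)
    (hG : ∀ x, 0 ≤ G x) (hGg : ∀ x, G x ≤ g x) (hg : Measurable g)
    (hc : 0 < c) (hC : 1 ≤ C) (hK : 0 < K)
    (hsub : ∀ t, 0 ≤ t → μ.real {x | c + t ≤ g x} ≤ C * exp (-t ^ 2 / (2 * K ^ 2)))
    (hLSI : ∀ s, 0 ≤ s →
      ent μ (fun x => exp (s * f x)) ≤ ρ / 2 * s ^ 2 * ∫ x, G x ^ 2 * exp (s * f x) ∂μ)
    {t : ℝ} (ht : 0 ≤ t) :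
    μ.real {x | t ≤ f x - ∫ y, f y ∂μ} ≤
      4 * C / 3 * exp (-t ^ 2 / (8 * (ρ * c ^ 2 + √ρ * K * t))) := by
  set X := fun x => max (g x - c) 0
  have htail : ∀ s, 0 < s → μ.real {x | s ≤ X x} ≤ C * exp (-(2 * K ^ 2)⁻¹ * s ^ 2) := by
    intro s hs
    have hset : {x | s ≤ X x} = {x | c + s ≤ g x} := by
      ext x
      simp [X, not_le.mpr hs, le_sub_iff_add_le']
    rw [hset, show -(2 * K ^ 2)⁻¹ * s ^ 2 = -s ^ 2 / (2 * K ^ 2) by ring]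
    exact hsub s hs.le
  obtain ⟨hXi, hM⟩ := integrable_exp_mul_sq_and_integral_le_of_tail (β := (8 * K ^ 2)⁻¹)
    ((hg.sub_const c).max measurable_const) (fun x => le_max_right _ _) (by linarith)
    (by positivity) (inv_strictAnti₀ (by positivity) (by nlinarith [sq_pos_of_pos hK])) htail
  have hM' : ∫ x, exp ((8 * K ^ 2)⁻¹ * X x ^ 2) ∂μ ≤ 1 + C / 3 :=
    hM.trans_eq (by field_simp; ring)
  obtain ⟨l, hl0, hlb, hlt⟩ :=
    exists_bernstein_exponent (by positivity : 0 < ρ * c ^ 2) (by positivity : 0 < √ρ * K) ht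
  have hlβ : 2 * ρ * l ^ 2 ≤ (8 * K ^ 2)⁻¹ := by
    have h4 := mul_le_mul_of_nonneg_left hlb (by positivity : 0 ≤ 4 * (√ρ * K))
    rw [mul_inv_cancel₀ (by positivity)] at h4
    have h16 := pow_le_one₀ (by positivity) h4 (n := 2)
    simp only [mul_pow, sq_sqrt hρ.le] at h16
    rw [← one_div, le_div_iff₀ (by positivity)]
    linarith
  calc μ.real {x | t ≤ f x - ∫ y, f y ∂μ}
      ≤ (1 + C / 3) * exp (2 * ρ * c ^ 2 * l ^ 2 - l * t) :=
        measure_sub_integral_ge_le_of_integral_exp_sq_le hf hB (by positivity) hG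
          (fun x => (hGg x).trans (sub_le_iff_le_add'.mp (le_max_left _ _)))
          ((hg.sub_const c).max measurable_const) hXi hM' hρ.le hLSI hl0 hlβ t
    _ ≤ 4 * C / 3 * exp (-t ^ 2 / (8 * (ρ * c ^ 2 + √ρ * K * t))) := by
        gcongr
        · linarith
        · exact (le_of_eq (by ring)).trans hlt

end BoundedFunction

end

theorem bernstein_type_mLSI_general
    {Ω : Type*} [MeasurableSpace Ω] (μ : Measure Ω) [IsProbabilityMeasure μ]
    (𝒜 : Set (Ω → ℝ)) (Γ : (Ω → ℝ) → Ω → ℝ) (ρ : ℝ) (hρ : 0 < ρ)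
    -- 𝒜 is a class of bounded measurable functions
    (h𝒜_bdd : ∀ h ∈ 𝒜, ∃ B : ℝ, ∀ x, |h x| ≤ B)
    (h𝒜_meas : ∀ h ∈ 𝒜, Measurable h)
    -- Γ is a difference operator on 𝒜
    (hΓ_nonneg : ∀ h ∈ 𝒜, ∀ x, 0 ≤ Γ h x)
    (hΓ_aff : ∀ h ∈ 𝒜, ∀ a b : ℝ, 0 ≤ a →
      (fun x => a * h x + b) ∈ 𝒜 ∧ Γ (fun x => a * h x + b) = fun x => a * Γ h x)
    -- μ satisfies a Γ-mLSI(ρ)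
    (hmLSI : ∀ h ∈ 𝒜,
      (∫ x, h x * Real.exp (h x) ∂μ)
          - (∫ x, Real.exp (h x) ∂μ) * Real.log (∫ x, Real.exp (h x) ∂μ)
        ≤ ρ / 2 * ∫ x, Γ h x ^ 2 * Real.exp (h x) ∂μ)
    -- the functions f and g
    (f g : Ω → ℝ) (hf : f ∈ 𝒜) (hg_meas : Measurable g)
    (hfg : ∀ x, Γ f x ≤ g x)
    -- g is sub-Gaussian
    (c C K : ℝ) (hc : 0 < c) (hC : 1 ≤ C) (hK : 0 < K)
    (hsub : ∀ t : ℝ, 0 ≤ t →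
      (μ {x | c + t ≤ g x}).toReal ≤ C * Real.exp (-t ^ 2 / (2 * K ^ 2))) :
    (∀ t : ℝ, 0 ≤ t →
      (μ {x | t ≤ f x - ∫ y, f y ∂μ}).toReal
        ≤ 4 * C / 3 *
            Real.exp (-t ^ 2 / (8 * (ρ * c ^ 2 + Real.sqrt ρ * K * t))))
    ∧ ((∀ a : ℝ, (fun x => a * f x) ∈ 𝒜 ∧
          Γ (fun x => a * f x) = fun x => |a| * Γ f x) →
        ∀ t : ℝ, 0 ≤ t →
          (μ {x | t ≤ (∫ y, f y ∂μ) - f x}).toReal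
            ≤ 4 * C / 3 *
                Real.exp (-t ^ 2 / (8 * (ρ * c ^ 2 + Real.sqrt ρ * K * t)))) := by
  obtain ⟨B, hB⟩ := h𝒜_bdd f hf
  have hLSI : ∀ h ∈ 𝒜, ∀ s : ℝ, 0 ≤ s →
      ent μ (fun x => exp (s * h x)) ≤ ρ / 2 * s ^ 2 * ∫ x, Γ h x ^ 2 * exp (s * h x) ∂μ := by
    intro h hh s hs
    obtain ⟨hmem, hΓ⟩ := hΓ_aff h hh s 0 hs
    simp only [add_zero] at hmem hΓ
    rw [ent_exp_eq]
    simpa only [hΓ, mul_pow, mul_assoc, integral_const_mul] using hmLSI _ hmem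
  refine ⟨fun t ht => measure_sub_integral_ge_le_bernstein (h𝒜_meas f hf) hB hρ
    (hΓ_nonneg f hf) hfg hg_meas hc hC hK hsub (hLSI f hf) ht, fun hsymm t ht => ?_⟩
  obtain ⟨hmem, hΓ⟩ := hsymm (-1)
  have hΓ' : Γ (fun x => -1 * f x) = Γ f := by
    rw [hΓ]
    simp
  have hset : {x | t ≤ (∫ y, f y ∂μ) - f x} = {x | t ≤ -1 * f x - ∫ y, -1 * f y ∂μ} := by
    ext x
    simp only [mem_ofPred_eq, integral_const_mul]
    constructor <;> intro <;> linarith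
  rw [hset]
  exact measure_sub_integral_ge_le_bernstein (h𝒜_meas _ hmem) (B := B) (by simpa using hB) hρ
    (hΓ_nonneg f hf) hfg hg_meas hc hC hK hsub (hΓ' ▸ hLSI _ hmem) ht

/-- **Bernstein-type inequality under a modified log-Sobolev inequality**
(Sambale–Sinulis, Corollary). -/
theorem bernstein_type_mLSI
    {Ω : Type*} [MeasurableSpace Ω] (μ : Measure Ω) [IsProbabilityMeasure μ]
    (𝒜 : Set (Ω → ℝ)) (Γ : (Ω → ℝ) → Ω → ℝ) (ρ : ℝ) (hρ : 0 < ρ)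
    -- 𝒜 is a class of bounded measurable functions
    (h𝒜_bdd : ∀ h ∈ 𝒜, ∃ B : ℝ, ∀ x, |h x| ≤ B)
    (h𝒜_meas : ∀ h ∈ 𝒜, Measurable h)
    -- Γ is a difference operator on 𝒜
    (hΓ_nonneg : ∀ h ∈ 𝒜, ∀ x, 0 ≤ Γ h x)
    (hΓ_meas : ∀ h ∈ 𝒜, Measurable (Γ h))
    (hΓ_aff : ∀ h ∈ 𝒜, ∀ a b : ℝ, 0 ≤ a →
      (fun x => a * h x + b) ∈ 𝒜 ∧ Γ (fun x => a * h x + b) = fun x => a * Γ h x)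
    -- μ satisfies a Γ-mLSI(ρ)
    (hmLSI : ∀ h ∈ 𝒜,
      (∫ x, h x * Real.exp (h x) ∂μ)
          - (∫ x, Real.exp (h x) ∂μ) * Real.log (∫ x, Real.exp (h x) ∂μ)
        ≤ ρ / 2 * ∫ x, Γ h x ^ 2 * Real.exp (h x) ∂μ)
    -- the functions f and g
    (f g : Ω → ℝ) (hf : f ∈ 𝒜) (hg_meas : Measurable g)
    (hfg : ∀ x, Γ f x ≤ g x)
    -- g is sub-Gaussian
    (c C K : ℝ) (hc : 0 < c) (hC : 1 ≤ C) (hK : 0 < K)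
    (hsub : ∀ t : ℝ, 0 ≤ t →
      (μ {x | c + t ≤ g x}).toReal ≤ C * Real.exp (-t ^ 2 / (2 * K ^ 2))) :
    (∀ t : ℝ, 0 ≤ t →
      (μ {x | t ≤ f x - ∫ y, f y ∂μ}).toReal
        ≤ 4 * C / 3 *
            Real.exp (-t ^ 2 / (8 * (ρ * c ^ 2 + Real.sqrt ρ * K * t))))
    ∧ ((∀ a : ℝ, (fun x => a * f x) ∈ 𝒜 ∧
          Γ (fun x => a * f x) = fun x => |a| * Γ f x) →
        ∀ t : ℝ, 0 ≤ t →
          (μ {x | t ≤ (∫ y, f y ∂μ) - f x}).toReal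
            ≤ 4 * C / 3 *
                Real.exp (-t ^ 2 / (8 * (ρ * c ^ 2 + Real.sqrt ρ * K * t)))) :=
  bernstein_type_mLSI_general μ 𝒜 Γ ρ hρ h𝒜_bdd h𝒜_meas hΓ_nonneg hΓ_aff hmLSI f g hf hg_meas hfg c
    C K hc hC hK hsub
end

section
/- Let (Ω, 𝓕, μ) be a probability space and Γ a difference operator such that μ satisfies a Γ-mLSI(ρ) for some ρ > 0. Let f ≥ 0 be a function in the admissible class that is Γ-(a,b)-self-bounded, i.e. Γ(f)² ≤ a·f + b pointwise for constants a, b ≥ 0. Then for all t ≥ 0, μ(f − E_μ f ≥ t) ≤ exp(−t²/(2ρ·(2a·E_μ f + 2b + at/3))). If additionally Γ(λ·f) = |λ|·Γ(f) for all λ ∈ ℝ, then for all t ∈ [0, E_μ f], μ(E_μ f − f ≥ t) ≤ exp(−t²/(2ρ·(2a·E_μ f + 2b + at/3))). -/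
/-!
Herbst's argument. Applying the mLSI to `s f` and bounding `Γ(f)²` by `a f + b` gives
`Ent(e^{sf}) ≤ (ρ/2) s² (a E[f e^{sf}] + b E[e^{sf}])`. Divided by `E[e^{sf}]` this is a
differential inequality for the cumulant generating function `K(s) = log E[e^{sf}]`, saying that
`K(s)/s - (ρa/2) K(s) - (ρb/2) s` decreases on `(0, ∞)`; its limit `E f` at `0⁺` yields the
sub-gamma bound `K(s) - s E f ≤ (ρa/2) s (K(s) - s E f) + (ρ/2)(a E f + b) s²`, and Chernoff's
inequality at a suitable `s` gives the upper tail. For `-f` the same argument produces the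
coefficient `-ρa/2` in place of `ρa/2`; since the cumulant generating function of `-f` is at
least `-s E f` by Jensen, it may be replaced by `ρa/2`, and the lower tail follows in the same way.
-/

open MeasureTheory Real

open ProbabilityTheory Set

open Filter Topology in
theorem herbst_le {K K' : ℝ → ℝ} {α β r : ℝ} (hr : 0 < r)
    (hK : ∀ s ∈ Icc 0 r, HasDerivAt K (K' s) s) (hK0 : K 0 = 0)
    (hdiff : ∀ s ∈ Ioo 0 r, s * K' s - K s ≤ s ^ 2 * (α * K' s + β)) :
    K r ≤ r * (K' 0 + α * K r + β * r) := by
  -- `K s / s - α K s - β s` is antitone on `(0, r]` and tends to `K' 0` at `0⁺`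
  set F : ℝ → ℝ := fun s => K s / s - (α * K s + β * s)
  have hF : ∀ s ∈ Ioc 0 r,
      HasDerivAt F ((K' s * s - K s * 1) / s ^ 2 - (α * K' s + β * 1)) s := fun s hs =>
    ((hK s (Ioc_subset_Icc_self hs)).div (hasDerivAt_id s) hs.1.ne').sub
      (((hK s (Ioc_subset_Icc_self hs)).const_mul α).add ((hasDerivAt_id s).const_mul β))
  have hanti : AntitoneOn F (Ioc 0 r) := by
    refine antitoneOn_of_deriv_nonpos (convex_Ioc 0 r)
      (fun s hs => (hF s hs).continuousAt.continuousWithinAt) ?_ ?_ <;> rw [interior_Ioc]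
    · exact fun s hs => (hF s (Ioo_subset_Ioc_self hs)).differentiableAt.differentiableWithinAt
    · intro s hs
      rw [(hF s (Ioo_subset_Ioc_self hs)).deriv, sub_nonpos, div_le_iff₀ (pow_pos hs.1 2)]
      linarith [hdiff s hs]
  have hK0' : HasDerivAt K (K' 0) 0 := hK 0 (left_mem_Icc.2 hr.le)
  have hlim : Tendsto F (𝓝[>] 0) (𝓝 (K' 0)) := by
    have h := hK0'.tendsto_slope_zero_right.sub
      (((hK0'.continuousAt.const_mul α).add (continuousAt_id.const_mul β)).tendsto.mono_left
        nhdsWithin_le_nhds)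
    simpa [F, hK0, div_eq_inv_mul] using h
  have hFr : F r ≤ K' 0 := by
    refine ge_of_tendsto hlim ?_
    filter_upwards [Ioc_mem_nhdsGT_of_mem ⟨le_rfl, hr⟩] with s hs
    exact hanti hs ⟨hr, le_rfl⟩ hs.2
  have : K r / r ≤ K' 0 + α * K r + β * r := by simp only [F] at hFr; linarith
  rwa [div_le_iff₀ hr, mul_comm] at this

theorem bernstein_exponent_le {α w t k r : ℝ} (hα : 0 ≤ α) (hw : 0 ≤ w) (ht : 0 < t)
    (hr : r * (12 * w + 4 * α * t) = 3 * t) (hk : k ≤ α * r * k + w * r ^ 2) :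
    -r * t + k ≤ -t ^ 2 / (8 * w + 4 * α * t / 3) := by
  have hE : 0 < 12 * w + 4 * α * t := by
    refine (add_nonneg (by positivity) (by positivity)).lt_of_ne fun h => ?_
    rw [← h, mul_zero] at hr
    linarith
  have hu : 0 < 12 * w + α * t := by nlinarith
  have hD : 0 < 8 * w + 4 * α * t / 3 := by linarith
  have hkE : k * ((12 * w + 4 * α * t) * (12 * w + α * t)) ≤ 9 * t ^ 2 * w := by
    have := mul_le_mul_of_nonneg_right hk (sq_nonneg (12 * w + 4 * α * t))
    linear_combination this
      + (α * k * (12 * w + 4 * α * t) + w * (r * (12 * w + 4 * α * t) + 3 * t)) * hr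
  rw [neg_div, le_neg, div_le_iff₀ hD]
  refine le_of_mul_le_mul_right ?_ (mul_pos hE hu)
  linear_combination (8 * w + 4 * α * t / 3) * hkE + 72 * sq_nonneg (t * w)
    - (t * (12 * w + α * t) * (8 * w + 4 * α * t / 3)) * hr

-- `entExp μ g` is the entropy `Ent_μ(e^g)`.
noncomputable def entExp {Ω : Type*} [MeasurableSpace Ω] (μ : Measure Ω) (g : Ω → ℝ) : ℝ :=
  ∫ x, g x * exp (g x) ∂μ - (∫ x, exp (g x) ∂μ) * log (∫ x, exp (g x) ∂μ)

section

variable {Ω : Type*} [MeasurableSpace Ω] {μ : Measure Ω} {X : Ω → ℝ}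

lemma integrable_exp_mul_of_ae_abs_le [IsFiniteMeasure μ] (hX : AEMeasurable X μ) {B : ℝ}
    (hB : ∀ᵐ ω ∂μ, |X ω| ≤ B) (s : ℝ) : Integrable (fun ω => exp (s * X ω)) μ := by
  refine .of_bound (measurable_exp.comp_aemeasurable (hX.const_mul s)).aestronglyMeasurable
    (exp (|s| * B)) (hB.mono fun ω hω => ?_)
  rw [norm_eq_abs, abs_exp, exp_le_exp]
  calc s * X ω ≤ |s| * |X ω| := (le_abs_self _).trans (abs_mul _ _).le
    _ ≤ |s| * B := by gcongr

lemma hasDerivAt_cgf_of_integrable_exp [IsProbabilityMeasure μ]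
    (hint : ∀ s, Integrable (fun ω => exp (s * X ω)) μ) (s : ℝ) :
    HasDerivAt (cgf X μ) (μ[fun ω => X ω * exp (s * X ω)] / mgf X μ s) s := by
  have hs : s ∈ interior (integrableExpSet X μ) := by
    rw [show integrableExpSet X μ = univ from eq_univ_of_forall hint, interior_univ]
    trivial
  exact (hasDerivAt_mgf hs).log (mgf_pos (hint s)).ne'

lemma mul_integral_le_cgf [IsProbabilityMeasure μ] (hX : Integrable X μ) {t : ℝ}
    (hint : Integrable (fun ω => exp (t * X ω)) μ) : t * μ[X] ≤ cgf X μ t := by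
  rw [cgf, le_log_iff_exp_le (mgf_pos hint), ← integral_const_mul]
  exact convexOn_exp.map_integral_le continuousOn_exp isClosed_univ (by simp)
    (hX.const_mul t) hint

lemma entExp_mul_eq (s : ℝ) : entExp μ (fun ω => s * X ω)
    = s * μ[fun ω => X ω * exp (s * X ω)] - mgf X μ s * log (mgf X μ s) := by
  simp only [entExp, mgf, ← integral_const_mul, mul_assoc]

theorem cgf_le_of_entExp_le [IsProbabilityMeasure μ]
    (hint : ∀ s, Integrable (fun ω => exp (s * X ω)) μ) {α β r : ℝ} (hr : 0 < r)
    (hent : ∀ s ∈ Ioo 0 r, entExp μ (fun ω => s * X ω)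
      ≤ s ^ 2 * (α * μ[fun ω => X ω * exp (s * X ω)] + β * mgf X μ s)) :
    cgf X μ r ≤ r * (μ[X] + α * cgf X μ r + β * r) := by
  have h := herbst_le (α := α) (β := β) hr (fun s _ => hasDerivAt_cgf_of_integrable_exp hint s)
    cgf_zero fun s hs => ?_
  · simpa [mgf_zero] using h
  have hM := mgf_pos (hint s)
  rw [← mul_le_mul_iff_of_pos_right hM]
  have := hent s hs
  rw [entExp_mul_eq] at this
  unfold cgf
  field_simp
  linarith

lemma entExp_le_of_sq_le {G : Ω → ℝ} {ρ a b s : ℝ} (hρ : 0 ≤ ρ)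
    (hXe : Integrable (fun ω => X ω * exp (s * X ω)) μ)
    (he : Integrable (fun ω => exp (s * X ω)) μ) (hsb : ∀ᵐ ω ∂μ, G ω ^ 2 ≤ a * X ω + b)
    (hLSI : entExp μ (fun ω => s * X ω) ≤ ρ / 2 * ∫ ω, (s * G ω) ^ 2 * exp (s * X ω) ∂μ) :
    entExp μ (fun ω => s * X ω)
      ≤ s ^ 2 * (ρ / 2 * a * μ[fun ω => X ω * exp (s * X ω)] + ρ / 2 * b * mgf X μ s) := by
  have hG : ∫ ω, G ω ^ 2 * exp (s * X ω) ∂μ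
      ≤ ∫ ω, a * (X ω * exp (s * X ω)) + b * exp (s * X ω) ∂μ :=
    integral_mono_of_nonneg (ae_of_all _ fun ω => by positivity)
      ((hXe.const_mul a).add (he.const_mul b))
      (hsb.mono fun ω h => by nlinarith [mul_le_mul_of_nonneg_right h (exp_pos (s * X ω)).le])
  calc entExp μ (fun ω => s * X ω)
      ≤ ρ / 2 * ∫ ω, (s * G ω) ^ 2 * exp (s * X ω) ∂μ := hLSI
    _ = ρ / 2 * s ^ 2 * ∫ ω, G ω ^ 2 * exp (s * X ω) ∂μ := by
      simp only [mul_pow, mul_assoc, integral_const_mul]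
    _ ≤ ρ / 2 * s ^ 2 * ∫ ω, a * (X ω * exp (s * X ω)) + b * exp (s * X ω) ∂μ := by gcongr
    _ = s ^ 2 * (ρ / 2 * a * μ[fun ω => X ω * exp (s * X ω)] + ρ / 2 * b * mgf X μ s) := by
      rw [integral_add (hXe.const_mul a) (he.const_mul b), integral_const_mul,
        integral_const_mul, mgf]
      ring

theorem measureReal_le_exp_of_cgf_le [IsProbabilityMeasure μ]
    (hint : ∀ s, Integrable (fun ω => exp (s * X ω)) μ) {α w t : ℝ} (hα : 0 ≤ α) (hw : 0 ≤ w)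
    (ht : 0 ≤ t)
    (hK : ∀ r, 0 < r → cgf X μ r - r * μ[X] ≤ α * r * (cgf X μ r - r * μ[X]) + w * r ^ 2) :
    μ.real {ω | t ≤ X ω - μ[X]} ≤ exp (-t ^ 2 / (8 * w + 4 * α * t / 3)) := by
  rcases ht.eq_or_lt with rfl | ht
  · simp
  rcases (show 0 ≤ 8 * w + 4 * α * t / 3 by positivity).eq_or_lt with hD | hD
  · simp [← hD]
  have hE : 0 < 12 * w + 4 * α * t := by nlinarith [mul_nonneg hα ht.le]
  -- this choice keeps `α r ≤ 3 / 4`, so the bound does not degenerate when `w = 0`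
  set r := 3 * t / (12 * w + 4 * α * t)
  have hr : r * (12 * w + 4 * α * t) = 3 * t := div_mul_cancel₀ _ hE.ne'
  have hr0 : 0 < r := by positivity
  calc μ.real {ω | t ≤ X ω - μ[X]} = μ.real {ω | μ[X] + t ≤ X ω} := by
        simp_rw [le_sub_iff_add_le']
    _ ≤ exp (-r * (μ[X] + t) + cgf X μ r) := measure_ge_le_exp_cgf _ hr0.le (hint r)
    _ ≤ exp (-t ^ 2 / (8 * w + 4 * α * t / 3)) := by
      have := bernstein_exponent_le hα hw ht hr (hK r hr0)
      gcongr
      linarith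

theorem cgf_sub_mul_integral_le [IsProbabilityMeasure μ] (hX : Integrable X μ) {α β r : ℝ}
    (hint : Integrable (fun ω => exp (r * X ω)) μ) (hr : 0 ≤ r)
    (hK : cgf X μ r ≤ r * (μ[X] + α * cgf X μ r + β * r)) :
    cgf X μ r - r * μ[X] ≤ |α| * r * (cgf X μ r - r * μ[X]) + (α * μ[X] + β) * r ^ 2 := by
  -- Jensen makes `cgf X μ r - r * μ[X]` nonnegative, so a negative `α` may be replaced by `|α|`
  have hJ := sub_nonneg.2 (mul_integral_le_cgf hX hint)
  have := mul_le_mul_of_nonneg_right (le_abs_self α) (mul_nonneg hr hJ)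
  linear_combination hK + this

theorem measureReal_le_exp_of_entExp_le [IsProbabilityMeasure μ] (hX : AEMeasurable X μ) {B : ℝ}
    (hB : ∀ᵐ ω ∂μ, |X ω| ≤ B) {G : Ω → ℝ} {ρ a b t : ℝ} (hρ : 0 ≤ ρ)
    (hsb : ∀ᵐ ω ∂μ, G ω ^ 2 ≤ a * X ω + b) (hv : 0 ≤ a * μ[X] + b) (ht : 0 ≤ t)
    (hLSI : ∀ s, 0 < s →
      entExp μ (fun ω => s * X ω) ≤ ρ / 2 * ∫ ω, (s * G ω) ^ 2 * exp (s * X ω) ∂μ) :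
    μ.real {ω | t ≤ X ω - μ[X]} ≤ exp (-t ^ 2 / (2 * ρ * (2 * (a * μ[X] + b) + |a| * t / 3))) := by
  have hint := integrable_exp_mul_of_ae_abs_le hX hB
  have hXi : Integrable X μ := .of_bound hX.aestronglyMeasurable B hB
  refine (measureReal_le_exp_of_cgf_le hint (α := ρ / 2 * |a|) (w := ρ / 2 * (a * μ[X] + b))
    (by positivity) (by positivity) ht fun r hr => ?_).trans_eq (congrArg exp (by ring))
  have hK := cgf_le_of_entExp_le hint hr fun s hs =>
    entExp_le_of_sq_le hρ ((hint s).bdd_mul hX.aestronglyMeasurable hB) (hint s) hsb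
      (hLSI s hs.1)
  have := cgf_sub_mul_integral_le hXi (hint r) hr.le hK
  rw [abs_mul, abs_of_nonneg (by positivity : 0 ≤ ρ / 2)] at this
  linear_combination this

end

theorem self_bounded_mLSI_general
    {Ω : Type*} [MeasurableSpace Ω] (μ : Measure Ω) [IsProbabilityMeasure μ]
    (𝒜 : Set (Ω → ℝ)) (Γ : (Ω → ℝ) → Ω → ℝ) (ρ : ℝ) (hρ : 0 < ρ)
    -- 𝒜 is a class of bounded measurable functions
    (h𝒜_bdd : ∀ h ∈ 𝒜, ∃ B : ℝ, ∀ x, |h x| ≤ B)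
    (h𝒜_meas : ∀ h ∈ 𝒜, Measurable h)
    -- Γ is a difference operator on 𝒜
    (hΓ_aff : ∀ h ∈ 𝒜, ∀ a b : ℝ, 0 ≤ a →
      (fun x => a * h x + b) ∈ 𝒜 ∧ Γ (fun x => a * h x + b) = fun x => a * Γ h x)
    -- μ satisfies a Γ-mLSI(ρ)
    (hmLSI : ∀ h ∈ 𝒜,
      (∫ x, h x * Real.exp (h x) ∂μ)
          - (∫ x, Real.exp (h x) ∂μ) * Real.log (∫ x, Real.exp (h x) ∂μ)
        ≤ ρ / 2 * ∫ x, Γ h x ^ 2 * Real.exp (h x) ∂μ)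
    -- f is a nonnegative Γ-(a,b)-self-bounded function
    (f : Ω → ℝ) (hf : f ∈ 𝒜) (hf_nonneg : ∀ x, 0 ≤ f x)
    (a b : ℝ) (ha : 0 ≤ a) (hb : 0 ≤ b)
    (hsb : ∀ x, Γ f x ^ 2 ≤ a * f x + b) :
    (∀ t : ℝ, 0 ≤ t →
      (μ {x | t ≤ f x - ∫ y, f y ∂μ}).toReal
        ≤ Real.exp (-t ^ 2 /
            (2 * ρ * (2 * a * (∫ y, f y ∂μ) + 2 * b + a * t / 3))))
    ∧ ((∀ lam : ℝ, (fun x => lam * f x) ∈ 𝒜 ∧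
          Γ (fun x => lam * f x) = fun x => |lam| * Γ f x) →
        ∀ t : ℝ, 0 ≤ t → t ≤ ∫ y, f y ∂μ →
          (μ {x | t ≤ (∫ y, f y ∂μ) - f x}).toReal
            ≤ Real.exp (-t ^ 2 /
                (2 * ρ * (2 * a * (∫ y, f y ∂μ) + 2 * b + a * t / 3)))) := by
  obtain ⟨B, hB⟩ := h𝒜_bdd f hf
  have hfm : AEMeasurable f μ := (h𝒜_meas f hf).aemeasurable
  have hm : 0 ≤ μ[f] := integral_nonneg hf_nonneg
  refine ⟨fun t ht => ?_, fun hneg t ht _ => ?_⟩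
  · refine (measureReal_le_exp_of_entExp_le hfm (ae_of_all _ hB) hρ.le (ae_of_all _ hsb)
      (by positivity) ht fun s hs => ?_).trans_eq (by rw [abs_of_nonneg ha]; ring_nf)
    obtain ⟨h𝒜s, hΓs⟩ := hΓ_aff f hf s 0 hs.le
    simp only [add_zero] at h𝒜s hΓs
    have := hmLSI _ h𝒜s
    rw [hΓs] at this
    exact this
  · have h := measureReal_le_exp_of_entExp_le (X := fun x => -f x) (a := -a) hfm.neg
      (ae_of_all _ fun x => by simpa using hB x) hρ.le (ae_of_all _ fun x => by simpa using hsb x)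
      (by rw [integral_neg, neg_mul_neg]; positivity) ht fun s hs => ?_
    · simp_rw [integral_neg, neg_sub_neg, abs_neg, abs_of_nonneg ha, neg_mul_neg] at h
      exact h.trans_eq (by ring_nf)
    obtain ⟨h𝒜s, hΓs⟩ := hneg (-s)
    have := hmLSI _ h𝒜s
    rw [hΓs, abs_neg, abs_of_pos hs] at this
    convert this using 3 <;> simp [entExp]

/-- **Deviation inequalities for self-bounded functions under an mLSI**
(Sambale–Sinulis, Proposition on self-bounded functions). -/
theorem self_bounded_mLSI
    {Ω : Type*} [MeasurableSpace Ω] (μ : Measure Ω) [IsProbabilityMeasure μ]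
    (𝒜 : Set (Ω → ℝ)) (Γ : (Ω → ℝ) → Ω → ℝ) (ρ : ℝ) (hρ : 0 < ρ)
    -- 𝒜 is a class of bounded measurable functions
    (h𝒜_bdd : ∀ h ∈ 𝒜, ∃ B : ℝ, ∀ x, |h x| ≤ B)
    (h𝒜_meas : ∀ h ∈ 𝒜, Measurable h)
    -- Γ is a difference operator on 𝒜
    (hΓ_nonneg : ∀ h ∈ 𝒜, ∀ x, 0 ≤ Γ h x)
    (hΓ_meas : ∀ h ∈ 𝒜, Measurable (Γ h))
    (hΓ_aff : ∀ h ∈ 𝒜, ∀ a b : ℝ, 0 ≤ a →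
      (fun x => a * h x + b) ∈ 𝒜 ∧ Γ (fun x => a * h x + b) = fun x => a * Γ h x)
    -- μ satisfies a Γ-mLSI(ρ)
    (hmLSI : ∀ h ∈ 𝒜,
      (∫ x, h x * Real.exp (h x) ∂μ)
          - (∫ x, Real.exp (h x) ∂μ) * Real.log (∫ x, Real.exp (h x) ∂μ)
        ≤ ρ / 2 * ∫ x, Γ h x ^ 2 * Real.exp (h x) ∂μ)
    -- f is a nonnegative Γ-(a,b)-self-bounded function
    (f : Ω → ℝ) (hf : f ∈ 𝒜) (hf_nonneg : ∀ x, 0 ≤ f x)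
    (a b : ℝ) (ha : 0 ≤ a) (hb : 0 ≤ b)
    (hsb : ∀ x, Γ f x ^ 2 ≤ a * f x + b) :
    (∀ t : ℝ, 0 ≤ t →
      (μ {x | t ≤ f x - ∫ y, f y ∂μ}).toReal
        ≤ Real.exp (-t ^ 2 /
            (2 * ρ * (2 * a * (∫ y, f y ∂μ) + 2 * b + a * t / 3))))
    ∧ ((∀ lam : ℝ, (fun x => lam * f x) ∈ 𝒜 ∧
          Γ (fun x => lam * f x) = fun x => |lam| * Γ f x) →
        ∀ t : ℝ, 0 ≤ t → t ≤ ∫ y, f y ∂μ →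
          (μ {x | t ≤ (∫ y, f y ∂μ) - f x}).toReal
            ≤ Real.exp (-t ^ 2 /
                (2 * ρ * (2 * a * (∫ y, f y ∂μ) + 2 * b + a * t / 3)))) :=
  self_bounded_mLSI_general μ 𝒜 Γ ρ hρ h𝒜_bdd h𝒜_meas hΓ_aff hmLSI f hf hf_nonneg a b ha hb hsb
end

section
/- Let d, n ∈ ℕ with n > d, and let X₁, …, X_n be independent, identically distributed random variables with values in [0,1] and mean η = E X₁ > 0. Define f_d(X) = Σ_{i=1}^n X_i·X_{i+1}⋯X_{i+d−1}, where indices are understood modulo n. Then for any t ≥ 0, P(f_d(X) − E f_d(X) ≥ √(n·η^d)·t) ≤ 2·exp(−t²/(2d²·(1 + t/√(n·η^d)))). -/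
/-!
Janson's argument. The windows of length `d` on the `n`-cycle can be coloured with
`2d - 1 ≤ d²` colours so that windows of one colour are disjoint, hence their products are
independent. Within a colour class the moment generating function therefore factorises, and each
`[0,1]`-valued term contributes at most the Poisson factor `exp (η^d (e^θ - 1))`; Hölder's
inequality over the colour classes combines them into
`E exp (θ f / (2d - 1)) ≤ exp (E f (e^θ - 1) / (2d - 1))`. The Chernoff bound at
`θ = log (1 + r / E f)` for the deviation `r`, together with `log (1 + u) ≥ 2u / (2 + u)`, gives
the Bernstein-type tail.
-/

open MeasureTheory ProbabilityTheory Finset Real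

lemma sub_mul_log_one_add_div_le {M r : ℝ} (hM : 0 < M) (hr : 0 ≤ r) :
    r - (M + r) * log (1 + r / M) ≤ -r ^ 2 / (2 * (M + r)) := by
  have hlog := le_log_one_add_of_nonneg (div_nonneg hr hM.le)
  rw [show 2 * (r / M) / (r / M + 2) = 2 * r / (r + 2 * M) by field_simp,
    div_le_iff₀ (by positivity)] at hlog
  rw [le_div_iff₀ (by positivity)]
  nlinarith [mul_le_mul_of_nonneg_left hlog (by positivity : 0 ≤ 2 * (M + r) ^ 2)]

lemma exp_mul_le_one_add_mul_exp_sub_one {y : ℝ} (h0 : 0 ≤ y) (h1 : y ≤ 1) (θ : ℝ) :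
    exp (θ * y) ≤ 1 + y * (exp θ - 1) := by
  have h := convexOn_exp.2 (Set.mem_univ 0) (Set.mem_univ θ) (sub_nonneg.2 h1) h0 (by ring)
  simp only [smul_eq_mul, mul_zero, zero_add, exp_zero, mul_one] at h
  rw [mul_comm]
  linarith

lemma neg_sq_div_two_mul_le_of_le {M m D t : ℝ} (hM : 0 < M) (ht : 0 ≤ t) (hm : 0 < m)
    (hmD : m ≤ D) :
    -(√M * t) ^ 2 / (2 * m * (M + √M * t)) ≤ -t ^ 2 / (2 * D * (1 + t / √M)) := by
  calc -(√M * t) ^ 2 / (2 * m * (M + √M * t)) = -t ^ 2 / (2 * m * (1 + t / √M)) := by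
        field_simp
        linear_combination (-t ^ 2) * mul_self_sqrt hM.le
    _ ≤ -t ^ 2 / (2 * D * (1 + t / √M)) := by
        rw [neg_div, neg_div]
        gcongr

namespace ProbabilityTheory

variable {Ω : Type*} [MeasurableSpace Ω] {P : Measure Ω}

lemma mgf_le_exp_integral_mul_exp_sub_one [IsProbabilityMeasure P] {Y : Ω → ℝ}
    (hY : AEMeasurable Y P) (h01 : ∀ᵐ ω ∂P, Y ω ∈ Set.Icc 0 1) (θ : ℝ) :
    mgf Y P θ ≤ exp (P[Y] * (exp θ - 1)) := by
  have hYint : Integrable Y P := .of_mem_Icc 0 1 hY h01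
  calc mgf Y P θ ≤ ∫ ω, (1 + Y ω * (exp θ - 1)) ∂P :=
        integral_mono_ae (integrable_exp_mul_of_mem_Icc hY h01)
          ((integrable_const 1).add (hYint.mul_const _))
          (h01.mono fun ω h => exp_mul_le_one_add_mul_exp_sub_one h.1 h.2 θ)
    _ = 1 + P[Y] * (exp θ - 1) := by
        rw [integral_add (integrable_const 1) (hYint.mul_const _), integral_const,
          integral_mul_const]
        simp
    _ ≤ exp (P[Y] * (exp θ - 1)) := by linarith [add_one_le_exp (P[Y] * (exp θ - 1))]

lemma iIndepFun.integral_finset_prod {ι : Type*} {X : ι → Ω → ℝ} (hX : iIndepFun X P)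
    (hmeas : ∀ i, AEStronglyMeasurable (X i) P) (T : Finset ι) :
    ∫ ω, ∏ i ∈ T, X i ω ∂P = ∏ i ∈ T, ∫ ω, X i ω ∂P := by
  calc ∫ ω, ∏ i ∈ T, X i ω ∂P = ∫ ω, ∏ i : T, X i ω ∂P := by
        congr with ω
        exact (prod_coe_sort T fun i => X i ω).symm
    _ = ∏ i : T, ∫ ω, X i ω ∂P :=
        (hX.precomp (g := ((↑) : T → ι)) Subtype.val_injective
          ).integral_fun_prod_eq_prod_integral fun i => hmeas i
    _ = ∏ i ∈ T, ∫ ω, X i ω ∂P := prod_coe_sort T fun i => ∫ ω, X i ω ∂P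

lemma iIndepFun.indepFun_prod_sum_prod {ι κ : Type*} [DecidableEq ι] {X : ι → Ω → ℝ}
    (hX : iIndepFun X P) (hmeas : ∀ i, Measurable (X i)) {W : κ → Finset ι} {G : Finset κ} {b : κ}
    (hb : Disjoint (W b) (G.biUnion W)) :
    IndepFun (fun ω => ∏ i ∈ W b, X i ω) (fun ω => ∑ k ∈ G, ∏ i ∈ W k, X i ω) P := by
  have h := (hX.indepFun_finset _ _ hb hmeas).comp
    (φ := fun v => ∏ i ∈ (W b).attach, v i)
    (ψ := fun v => ∑ k ∈ G.attach, ∏ i ∈ (W k.1).attach, v ⟨i.1, mem_biUnion.2 ⟨k.1, k.2, i.2⟩⟩)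
    (by fun_prop) (by fun_prop)
  convert h using 1
  · funext ω
    exact (prod_attach (W b) fun i => X i ω).symm
  · funext ω
    simp only [Function.comp_apply]
    rw [← sum_attach G]
    exact sum_congr rfl fun k _ => (prod_attach (W k.1) fun i => X i ω).symm

lemma iIndepFun.mgf_sum_prod_of_pairwiseDisjoint {ι κ : Type*} {X : ι → Ω → ℝ}
    (hX : iIndepFun X P) (hmeas : ∀ i, Measurable (X i)) {W : κ → Finset ι} {G : Finset κ}
    (hW : (G : Set κ).PairwiseDisjoint W) (θ : ℝ) :
    mgf (fun ω => ∑ k ∈ G, ∏ i ∈ W k, X i ω) P θ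
      = ∏ k ∈ G, mgf (fun ω => ∏ i ∈ W k, X i ω) P θ := by
  classical
  induction G using Finset.induction_on with
  | empty => simp [hX.isProbabilityMeasure]
  | insert b G hb ih =>
    have hdisj : Disjoint (W b) (G.biUnion W) :=
      (disjoint_biUnion_right _ _ _).2 fun k hk =>
        hW (mem_insert_self b G) (mem_insert_of_mem hk) (ne_of_mem_of_not_mem hk hb).symm
    have hsplit : (fun ω => ∑ k ∈ insert b G, ∏ i ∈ W k, X i ω)
        = (fun ω => ∏ i ∈ W b, X i ω) + fun ω => ∑ k ∈ G, ∏ i ∈ W k, X i ω := by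
      funext ω
      simp [sum_insert hb]
    rw [hsplit, (hX.indepFun_prod_sum_prod hmeas hdisj).mgf_add' (by fun_prop) (by fun_prop),
      ih (hW.subset (by simp)), prod_insert hb]

lemma mgf_sum_div_card_le_prod_rpow {ι : Type*} {S : ι → Ω → ℝ} {s : Finset ι}
    (hs : s.Nonempty) (hS : ∀ q ∈ s, AEMeasurable (S q) P) {θ : ℝ}
    (hint : ∀ q ∈ s, Integrable (fun ω => exp (θ * S q ω)) P) :
    mgf (fun ω => ∑ q ∈ s, S q ω) P (θ / #s) ≤ ∏ q ∈ s, mgf (S q) P θ ^ (#s : ℝ)⁻¹ := by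
  have hcard : (#s : ℝ) ≠ 0 := by simp [hs.ne_empty]
  have hpoint : ∀ ω, ENNReal.ofReal (exp (θ / #s * ∑ q ∈ s, S q ω))
      = ∏ q ∈ s, ENNReal.ofReal (exp (θ * S q ω)) ^ (#s : ℝ)⁻¹ := fun ω => by
    simp_rw [ENNReal.ofReal_rpow_of_nonneg (exp_pos _).le (inv_nonneg.2 (Nat.cast_nonneg _)),
      ← exp_mul, ← ENNReal.ofReal_prod_of_nonneg fun _ _ => (exp_pos _).le, ← exp_sum, mul_sum]
    congr 2
    exact sum_congr rfl fun q _ => by ring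
  have holder := ENNReal.lintegral_prod_norm_pow_le (μ := P) s
    (f := fun q ω => ENNReal.ofReal (exp (θ * S q ω)))
    (fun q hq => ((hS q hq).const_mul θ).exp.ennreal_ofReal) (p := fun _ => (#s : ℝ)⁻¹)
    (by simp [hcard]) (fun _ _ => by positivity)
  rw [mgf, integral_eq_lintegral_of_nonneg_ae (ae_of_all _ fun _ => (exp_pos _).le)
    (by fun_prop)]
  refine ENNReal.toReal_le_of_le_ofReal (prod_nonneg fun _ _ => rpow_nonneg mgf_nonneg _) ?_
  rw [lintegral_congr hpoint, ENNReal.ofReal_prod_of_nonneg fun _ _ => rpow_nonneg mgf_nonneg _]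
  refine holder.trans_eq (prod_congr rfl fun q hq => ?_)
  rw [← ENNReal.ofReal_rpow_of_nonneg mgf_nonneg (by positivity), mgf,
    ofReal_integral_eq_lintegral_ofReal (hint q hq) (ae_of_all _ fun _ => (exp_pos _).le)]

variable [IsProbabilityMeasure P] {ι κ : Type*} [DecidableEq κ] {Y : ι → Ω → ℝ} {s : Finset ι}
  {c : ι → κ} {t : Finset κ}

theorem mgf_sum_le_of_coloring (ht : t.Nonempty) (hc : ∀ i ∈ s, c i ∈ t)
    (hY : ∀ i, AEMeasurable (Y i) P) (h01 : ∀ i, ∀ᵐ ω ∂P, Y i ω ∈ Set.Icc 0 1) (θ : ℝ)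
    (hfac : ∀ q ∈ t, mgf (fun ω => ∑ i ∈ s with c i = q, Y i ω) P θ
      = ∏ i ∈ s with c i = q, mgf (Y i) P θ) :
    mgf (fun ω => ∑ i ∈ s, Y i ω) P (θ / #t) ≤ exp ((∑ i ∈ s, P[Y i]) * (exp θ - 1) / #t) := by
  set S : κ → Ω → ℝ := fun q ω => ∑ i ∈ s with c i = q, Y i ω
  have hS_meas : ∀ q, AEMeasurable (S q) P := fun q => by fun_prop
  have hS_int : ∀ q, Integrable (fun ω => exp (θ * S q ω)) P := fun q => by
    refine integrable_exp_mul_of_mem_Icc (hS_meas q) (a := 0) (b := #{i ∈ s | c i = q} • 1) ?_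
    filter_upwards [(Filter.eventually_all_finset s).2 fun i _ => h01 i] with ω hω
    exact ⟨sum_nonneg fun i hi => (hω i (mem_filter.1 hi).1).1,
      sum_le_card_nsmul _ _ _ fun i hi => (hω i (mem_filter.1 hi).1).2⟩
  rw [show (fun ω => ∑ i ∈ s, Y i ω) = fun ω => ∑ q ∈ t, S q ω from
    funext fun ω => (sum_fiberwise_of_maps_to hc _).symm]
  calc mgf (fun ω => ∑ q ∈ t, S q ω) P (θ / #t)
      ≤ ∏ q ∈ t, mgf (S q) P θ ^ (#t : ℝ)⁻¹ :=
        mgf_sum_div_card_le_prod_rpow ht (fun q _ => hS_meas q) fun q _ => hS_int q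
    _ ≤ ∏ q ∈ t, (∏ i ∈ s with c i = q, exp (P[Y i] * (exp θ - 1))) ^ (#t : ℝ)⁻¹ := by
        refine prod_le_prod (fun _ _ => rpow_nonneg mgf_nonneg _) fun q hq => ?_
        rw [hfac q hq]
        exact rpow_le_rpow (prod_nonneg fun _ _ => mgf_nonneg)
          (prod_le_prod (fun _ _ => mgf_nonneg) fun i _ =>
            mgf_le_exp_integral_mul_exp_sub_one (hY i) (h01 i) θ) (by positivity)
    _ = exp ((∑ i ∈ s, P[Y i]) * (exp θ - 1) / #t) := by
        simp_rw [← exp_sum, ← exp_mul, ← exp_sum, ← sum_mul, sum_fiberwise_of_maps_to hc,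
          div_eq_mul_inv]

theorem measureReal_le_exp_of_coloring (ht : t.Nonempty) (hc : ∀ i ∈ s, c i ∈ t)
    (hY : ∀ i, AEMeasurable (Y i) P) (h01 : ∀ i, ∀ᵐ ω ∂P, Y i ω ∈ Set.Icc 0 1)
    (hfac : ∀ θ, ∀ q ∈ t, mgf (fun ω => ∑ i ∈ s with c i = q, Y i ω) P θ
      = ∏ i ∈ s with c i = q, mgf (Y i) P θ)
    (hM : 0 < ∑ i ∈ s, P[Y i]) {r : ℝ} (hr : 0 ≤ r) :
    P.real {ω | r ≤ ∑ i ∈ s, Y i ω - ∫ ω', ∑ i ∈ s, Y i ω' ∂P}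
      ≤ exp (-r ^ 2 / (2 * #t * (∑ i ∈ s, P[Y i] + r))) := by
  set M := ∑ i ∈ s, P[Y i]
  -- the minimiser of the Poisson-type Chernoff exponent `M (e^θ - 1) - θ (M + r)`
  set θ := log (1 + r / M) with hθ_def
  have hm : (0 : ℝ) < #t := by exact_mod_cast ht.card_pos
  have hθ : 0 ≤ θ := log_nonneg (by linarith [div_nonneg hr hM.le])
  have hEF : ∫ ω, ∑ i ∈ s, Y i ω ∂P = M :=
    integral_finsetSum s fun i _ => .of_mem_Icc 0 1 (hY i) (h01 i)
  have hint : Integrable (fun ω => exp (θ / #t * (∑ i ∈ s, Y i ω - M))) P := by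
    refine integrable_exp_mul_of_mem_Icc (by fun_prop) (a := -M) (b := #s • 1 - M) ?_
    filter_upwards [(Filter.eventually_all_finset s).2 fun i _ => h01 i] with ω hω
    exact ⟨by linarith [sum_nonneg fun i hi => (hω i hi).1],
      by linarith [sum_le_card_nsmul _ _ _ fun i hi => (hω i hi).2]⟩
  rw [hEF]
  calc P.real {ω | r ≤ ∑ i ∈ s, Y i ω - M}
      ≤ exp (-(θ / #t) * r) * mgf (fun ω => ∑ i ∈ s, Y i ω - M) P (θ / #t) :=
        measure_ge_le_exp_mul_mgf r (div_nonneg hθ hm.le) hint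
    _ = exp (-(θ / #t) * r)
          * (mgf (fun ω => ∑ i ∈ s, Y i ω) P (θ / #t) * exp (θ / #t * -M)) := by
        simp_rw [sub_eq_add_neg, mgf_add_const]
    _ ≤ exp (-(θ / #t) * r) * (exp (M * (exp θ - 1) / #t) * exp (θ / #t * -M)) := by
        gcongr
        exact mgf_sum_le_of_coloring ht hc hY h01 θ (hfac θ)
    _ = exp ((r - (M + r) * θ) / #t) := by
        rw [← exp_add, ← exp_add, hθ_def, exp_log (by linarith [div_nonneg hr hM.le])]
        congr 1
        field_simp
        ring
    _ ≤ exp (-r ^ 2 / (2 * #t * (M + r))) := by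
        refine exp_le_exp.2 ((div_le_div_of_nonneg_right (sub_mul_log_one_add_div_le hM hr)
          hm.le).trans_eq ?_)
        rw [div_div, mul_right_comm]

end ProbabilityTheory

section CyclicWindow

variable {n d : ℕ} (hn : 0 < n)

def cyclicWindow (d i : ℕ) : Finset (Fin n) :=
  (range d).image fun k => ⟨(i + k) % n, Nat.mod_lt _ hn⟩

lemma injOn_cyclicShift (hdn : d ≤ n) (i : ℕ) :
    Set.InjOn (fun k => (⟨(i + k) % n, Nat.mod_lt _ hn⟩ : Fin n)) (range d) := by
  intro k hk k' hk' h
  simp only [coe_range, Set.mem_Iio] at hk hk'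
  have := Nat.ModEq.add_left_cancel' i (Fin.mk.inj h)
  rwa [Nat.ModEq, Nat.mod_eq_of_lt (by omega), Nat.mod_eq_of_lt (by omega)] at this

lemma prod_cyclicWindow {M : Type*} [CommMonoid M] (hdn : d ≤ n) (i : ℕ) (g : Fin n → M) :
    ∏ j ∈ cyclicWindow hn d i, g j = ∏ k ∈ range d, g ⟨(i + k) % n, Nat.mod_lt _ hn⟩ :=
  prod_image (injOn_cyclicShift hn hdn i)

lemma card_cyclicWindow (hdn : d ≤ n) (i : ℕ) : #(cyclicWindow hn d i) = d :=
  (card_image_of_injOn (injOn_cyclicShift hn hdn i)).trans (card_range d)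

lemma le_and_lt_of_mem_cyclicWindow {i : ℕ} (hid : i + d ≤ n) {j : Fin n}
    (hj : j ∈ cyclicWindow hn d i) : i ≤ j ∧ (j : ℕ) < i + d := by
  obtain ⟨k, hk, rfl⟩ := mem_image.1 hj
  rw [mem_range] at hk
  simp only [Nat.mod_eq_of_lt (show i + k < n by omega)]
  omega

/-- Windows that do not wrap around the end of the cycle are coloured by the residue of their
start modulo `d`; each of the fewer than `d` wrapping windows gets a colour of its own. -/
def cyclicWindowColor (n d i : ℕ) : ℕ :=
  if i + d ≤ n then i % d else i + 2 * d - 1 - n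

lemma cyclicWindowColor_lt (hd : 0 < d) {i : ℕ} (hi : i < n) :
    cyclicWindowColor n d i < 2 * d - 1 := by
  unfold cyclicWindowColor
  split_ifs
  · have := Nat.mod_lt i hd
    omega
  · omega

lemma disjoint_cyclicWindow_of_color_eq {i i' : ℕ} (hi : i < n) (hi' : i' < n) (hne : i ≠ i')
    (hcol : cyclicWindowColor n d i = cyclicWindowColor n d i') :
    Disjoint (cyclicWindow hn d i) (cyclicWindow hn d i') := by
  unfold cyclicWindowColor at hcol
  split_ifs at hcol with h h'
  · rw [disjoint_left]
    intro j hj hj'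
    have := le_and_lt_of_mem_cyclicWindow hn h hj
    have := le_and_lt_of_mem_cyclicWindow hn h' hj'
    rcases Nat.lt_or_gt_of_ne hne with hlt | hlt
    · have := Nat.le_of_dvd (by omega) ((Nat.modEq_iff_dvd' hlt.le).1 hcol)
      omega
    · have := Nat.le_of_dvd (by omega) ((Nat.modEq_iff_dvd' hlt.le).1 hcol.symm)
      omega
  · have := Nat.mod_lt i (by omega : 0 < d)
    omega
  · have := Nat.mod_lt i' (by omega : 0 < d)
    omega
  · omega

lemma pairwiseDisjoint_cyclicWindow_of_color_eq (q : ℕ) :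
    (({i | cyclicWindowColor n d i = q} : Finset (Fin n)) : Set (Fin n)).PairwiseDisjoint
      fun i => cyclicWindow hn d i :=
  fun i hi i' hi' hne => disjoint_cyclicWindow_of_color_eq hn i.2 i'.2 (Fin.val_ne_of_ne hne)
    ((mem_filter.1 hi).2.trans (mem_filter.1 hi').2.symm)

end CyclicWindow

theorem d_runs_concentration_general
    {Ω : Type*} [MeasurableSpace Ω] (P : Measure Ω) [IsProbabilityMeasure P]
    (d n : ℕ) (hdn : d < n)
    (X : Fin n → Ω → ℝ) (hX_meas : ∀ i, Measurable (X i))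
    (hX_range : ∀ i ω, X i ω ∈ Set.Icc (0 : ℝ) 1)
    (hX_indep : ProbabilityTheory.iIndepFun X P)
    (η : ℝ) (hη : 0 < η) (hmean : ∀ i, ∫ ω, X i ω ∂P = η)
    -- the d-runs statistic with indices taken modulo n
    (f : Ω → ℝ)
    (hf : f = fun ω => ∑ i : Fin n, ∏ k ∈ Finset.range d,
      X ⟨((i : ℕ) + k) % n, Nat.mod_lt _ (Nat.lt_of_le_of_lt (Nat.zero_le d) hdn)⟩ ω) :
    ∀ t : ℝ, 0 ≤ t →
      (P {ω | Real.sqrt (n * η ^ d) * t ≤ f ω - ∫ ω', f ω' ∂P}).toReal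
        ≤ 2 * Real.exp (-t ^ 2 /
            (2 * d ^ 2 * (1 + t / Real.sqrt (n * η ^ d)))) := by
  intro t ht
  obtain rfl | hd := Nat.eq_zero_or_pos d
  · simpa [measureReal_def] using measureReal_le_one.trans (one_le_two (α := ℝ))
  have hn : 0 < n := hd.trans hdn
  set Y : Fin n → Ω → ℝ := fun i ω => ∏ j ∈ cyclicWindow hn d i, X j ω
  have hfY : f = fun ω => ∑ i, Y i ω := by simp only [hf, Y, prod_cyclicWindow hn hdn.le]
  have hmeanY : ∀ i, P[Y i] = η ^ d := fun i => by
    rw [hX_indep.integral_finset_prod fun j => (hX_meas j).aestronglyMeasurable,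
      prod_congr rfl fun j _ => hmean j, prod_const, card_cyclicWindow hn hdn.le]
  have htail := measureReal_le_exp_of_coloring (Y := Y) (s := univ) (t := range (2 * d - 1))
    (c := fun i : Fin n => cyclicWindowColor n d i) ⟨0, mem_range.2 (by omega)⟩
    (fun i _ => mem_range.2 (cyclicWindowColor_lt hd i.2)) (fun i => by fun_prop)
    (fun i => ae_of_all _ fun ω => ⟨prod_nonneg fun j _ => (hX_range j ω).1,
      prod_le_one (fun j _ => (hX_range j ω).1) fun j _ => (hX_range j ω).2⟩)
    (fun θ q _ => hX_indep.mgf_sum_prod_of_pairwiseDisjoint hX_meas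
      (pairwiseDisjoint_cyclicWindow_of_color_eq hn q) θ)
    (by simp only [hmeanY, sum_const, card_univ, Fintype.card_fin, nsmul_eq_mul]; positivity)
    (r := √(n * η ^ d) * t) (by positivity)
  simp only [hmeanY, sum_const, card_univ, Fintype.card_fin, card_range, nsmul_eq_mul] at htail
  have hcolors : 0 < 2 * d - 1 ∧ 2 * d - 1 ≤ d ^ 2 :=
    ⟨by omega, Nat.sub_le_of_le_add (by nlinarith)⟩
  rw [hfY]
  refine htail.trans ((exp_le_exp.2 (neg_sq_div_two_mul_le_of_le (D := (d : ℝ) ^ 2)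
    (by positivity) ht (by exact_mod_cast hcolors.1) (by exact_mod_cast hcolors.2))).trans ?_)
  linarith [exp_pos (-t ^ 2 / (2 * d ^ 2 * (1 + t / √(n * η ^ d))))]

/-- **Concentration for the `d`-runs statistic on the cycle of length `n`**
(Sambale–Sinulis, Proposition 13). -/
theorem d_runs_concentration
    {Ω : Type*} [MeasurableSpace Ω] (P : Measure Ω) [IsProbabilityMeasure P]
    (d n : ℕ) (hdn : d < n)
    (X : Fin n → Ω → ℝ) (hX_meas : ∀ i, Measurable (X i))
    (hX_range : ∀ i ω, X i ω ∈ Set.Icc (0 : ℝ) 1)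
    (hX_indep : ProbabilityTheory.iIndepFun X P)
    (hX_ident : ∀ i j, Measure.map (X i) P = Measure.map (X j) P)
    (η : ℝ) (hη : 0 < η) (hmean : ∀ i, ∫ ω, X i ω ∂P = η)
    -- the d-runs statistic with indices taken modulo n
    (f : Ω → ℝ)
    (hf : f = fun ω => ∑ i : Fin n, ∏ k ∈ Finset.range d,
      X ⟨((i : ℕ) + k) % n, Nat.mod_lt _ (Nat.lt_of_le_of_lt (Nat.zero_le d) hdn)⟩ ω) :
    ∀ t : ℝ, 0 ≤ t →
      (P {ω | Real.sqrt (n * η ^ d) * t ≤ f ω - ∫ ω', f ω' ∂P}).toReal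
        ≤ 2 * Real.exp (-t ^ 2 /
            (2 * d ^ 2 * (1 + t / Real.sqrt (n * η ^ d)))) :=
  d_runs_concentration_general P d n hdn X hX_meas hX_range hX_indep η hη hmean f hf
end
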